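/- arXiv:2101.11879 — 3 statements merged into one kernel-verified Lean document; each statement's English description precedes it below -/
import Mathlib

section
/- Let A, B, r, θ ∈ ℝ with r ≠ 0. Define λ(x,y) = −r·(cos θ·x + sin θ·y) and f(x,y) = A·exp(2r·(cos θ·x + sin θ·y) + B) on ℝ². Then D₁(λ,f) = 0 and D₂(λ,f) = 0, where D₁ and D₂ are the operators D₁(λ,f) = (λ_x+f_x)(2λ_x f_x + f_{xx}) + (λ_y+f_y)(2λ_y f_x + f_{xy}) − (6λ_x² f_x + 2λ_{xx} f_x + 5λ_x f_{xx} + f_{xxx}) − (6λ_y² f_x + 2λ_{yy} f_x + 5λ_y f_{xy} + f_{xyy}) and analogously D₂ with the roles of the first differentiation index replaced by y. -/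
noncomputable def dx (f : ℝ → ℝ → ℝ) : ℝ → ℝ → ℝ := fun x y => deriv (fun t => f t y) x
noncomputable def dy (f : ℝ → ℝ → ℝ) : ℝ → ℝ → ℝ := fun x y => deriv (fun t => f x t) y

/-- The operator `D₁` from the paper. -/
noncomputable def D1 (l f : ℝ → ℝ → ℝ) : ℝ → ℝ → ℝ := fun x y =>
  (dx l x y + dx f x y) * (2 * dx l x y * dx f x y + dx (dx f) x y)
  + (dy l x y + dy f x y) * (2 * dy l x y * dx f x y + dy (dx f) x y)
  - (6 * (dx l x y)^2 * dx f x y + 2 * dx (dx l) x y * dx f x y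
      + 5 * dx l x y * dx (dx f) x y + dx (dx (dx f)) x y)
  - (6 * (dy l x y)^2 * dx f x y + 2 * dy (dy l) x y * dx f x y
      + 5 * dy l x y * dy (dx f) x y + dy (dy (dx f)) x y)

/-- The operator `D₂` from the paper. -/
noncomputable def D2 (l f : ℝ → ℝ → ℝ) : ℝ → ℝ → ℝ := fun x y =>
  (dx l x y + dx f x y) * (2 * dx l x y * dy f x y + dx (dy f) x y)
  + (dy l x y + dy f x y) * (2 * dy l x y * dy f x y + dy (dy f) x y)
  - (6 * (dx l x y)^2 * dy f x y + 2 * dx (dx l) x y * dy f x y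
      + 5 * dx l x y * dx (dy f) x y + dx (dx (dy f)) x y)
  - (6 * (dy l x y)^2 * dy f x y + 2 * dy (dy l) x y * dy f x y
      + 5 * dy l x y * dy (dy f) x y + dy (dy (dy f)) x y)

/-! Both exponents depend only on `t = c x + s y` (with `c = cos θ`, `s = sin θ`), so each partial
derivative multiplies `λ` by `c` or `s` and `f` by `2 r c` or `2 r s`. Hence every factor
`2 λ_• f_• + f_••` vanishes, and each cubic bracket is a multiple of `(12 - 20 + 8) r³ f`. -/

lemma dx_eq_of_hasDerivAt {f g : ℝ → ℝ → ℝ}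
    (h : ∀ x y, HasDerivAt (fun t => f t y) (g x y) x) : dx f = g :=
  funext₂ fun x y => (h x y).deriv

lemma dy_eq_of_hasDerivAt {f g : ℝ → ℝ → ℝ}
    (h : ∀ x y, HasDerivAt (fun t => f x t) (g x y) y) : dy f = g :=
  funext₂ fun x y => (h x y).deriv

lemma dx_const (a : ℝ) : dx (fun _ _ => a) = fun _ _ => 0 :=
  dx_eq_of_hasDerivAt fun _ _ => hasDerivAt_const _ a

lemma dy_const (a : ℝ) : dy (fun _ _ => a) = fun _ _ => 0 :=
  dy_eq_of_hasDerivAt fun _ _ => hasDerivAt_const _ a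

lemma dx_const_mul_linear (a c s : ℝ) :
    dx (fun x y => a * (c * x + s * y)) = fun _ _ => a * c :=
  dx_eq_of_hasDerivAt fun x y => by
    simpa using (((hasDerivAt_id x).const_mul c).add_const (s * y)).const_mul a

lemma dy_const_mul_linear (a c s : ℝ) :
    dy (fun x y => a * (c * x + s * y)) = fun _ _ => a * s :=
  dy_eq_of_hasDerivAt fun x y => by
    simpa using (((hasDerivAt_id y).const_mul s).const_add (c * x)).const_mul a

lemma dx_const_mul_exp_linear (A k c s B : ℝ) :
    dx (fun x y => A * Real.exp (k * (c * x + s * y) + B)) =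
      fun x y => k * c * A * Real.exp (k * (c * x + s * y) + B) :=
  dx_eq_of_hasDerivAt fun x y => by
    have h := ((((hasDerivAt_id x).const_mul c).add_const (s * y)).const_mul k
      |>.add_const B).exp.const_mul A
    exact h.congr_deriv (by simp only [id]; ring)

lemma dy_const_mul_exp_linear (A k c s B : ℝ) :
    dy (fun x y => A * Real.exp (k * (c * x + s * y) + B)) =
      fun x y => k * s * A * Real.exp (k * (c * x + s * y) + B) :=
  dy_eq_of_hasDerivAt fun x y => by
    have h := ((((hasDerivAt_id y).const_mul s).const_add (c * x)).const_mul k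
      |>.add_const B).exp.const_mul A
    exact h.congr_deriv (by simp only [id]; ring)

theorem D1_eq_zero_and_D2_eq_zero_linear_exp (A B r c s x y : ℝ) :
    D1 (fun x y => -r * (c * x + s * y))
        (fun x y => A * Real.exp (2 * r * (c * x + s * y) + B)) x y = 0 ∧
      D2 (fun x y => -r * (c * x + s * y))
        (fun x y => A * Real.exp (2 * r * (c * x + s * y) + B)) x y = 0 := by
  constructor <;>
  · simp only [D1, D2, dx_const_mul_exp_linear, dy_const_mul_exp_linear,
      dx_const_mul_linear, dy_const_mul_linear, dx_const, dy_const]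
    ring

theorem stmt8_general (A B r θ : ℝ) :
    ∀ x y : ℝ,
      D1 (fun x y => -r * (Real.cos θ * x + Real.sin θ * y))
         (fun x y => A * Real.exp (2 * r * (Real.cos θ * x + Real.sin θ * y) + B)) x y = 0 ∧
      D2 (fun x y => -r * (Real.cos θ * x + Real.sin θ * y))
         (fun x y => A * Real.exp (2 * r * (Real.cos θ * x + Real.sin θ * y) + B)) x y = 0 :=
  D1_eq_zero_and_D2_eq_zero_linear_exp A B r (Real.cos θ) (Real.sin θ)

theorem stmt8 (A B r θ : ℝ) (hr : r ≠ 0) :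
    ∀ x y : ℝ,
      D1 (fun x y => -r * (Real.cos θ * x + Real.sin θ * y))
         (fun x y => A * Real.exp (2 * r * (Real.cos θ * x + Real.sin θ * y) + B)) x y = 0 ∧
      D2 (fun x y => -r * (Real.cos θ * x + Real.sin θ * y))
         (fun x y => A * Real.exp (2 * r * (Real.cos θ * x + Real.sin θ * y) + B)) x y = 0 :=
  stmt8_general A B r θ
end

section
/- Let A, θ ∈ ℝ and let U ⊆ ℝ² be an open set on which u(x,y) := cos θ·x + sin θ·y > 0. Define λ(x,y) = (1/2)·log(u(x,y)) and f(x,y) = A·log(u(x,y)) on U. Then D₁(λ,f) = 0 and D₂(λ,f) = 0 on U. -/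
/-! Along the linear form `u = a x + b y`, `∂ₓ` and `∂_y` act on `c · log u` and `c · u ^ m` (`m : ℤ`)
by multiplying with `a`, resp. `b`, and lowering the exponent, so every derivative in `D₁`, `D₂` is a
monomial in `u` and both operators reduce to a rational identity in `u`, valid once `u ≠ 0`.
The chain-rule steps need no differentiability hypotheses: `deriv` is `0` where undefined, and the
formulas for `deriv log` and `deriv (· ^ m)` hold everywhere with `0⁻¹ = 0`. -/

open Real

lemma deriv_comp_mul_add (g : ℝ → ℝ) (a d x : ℝ) :
    deriv (fun t => g (a * t + d)) x = a * deriv g (a * x + d) := by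
  rw [← smul_eq_mul, ← deriv_comp_add_const]
  exact deriv_comp_mul_left a (fun s => g (s + d)) x

lemma deriv_comp_const_add_mul (g : ℝ → ℝ) (d a x : ℝ) :
    deriv (fun t => g (d + a * t)) x = a * deriv g (d + a * x) := by
  simpa only [add_comm d] using deriv_comp_mul_add g a d x

lemma dx_comp_linear (g : ℝ → ℝ) (a b : ℝ) :
    dx (fun x y => g (a * x + b * y)) = fun x y => a * deriv g (a * x + b * y) := by
  funext x y
  exact deriv_comp_mul_add g a (b * y) x

lemma dy_comp_linear (g : ℝ → ℝ) (a b : ℝ) :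
    dy (fun x y => g (a * x + b * y)) = fun x y => b * deriv g (a * x + b * y) := by
  funext x y
  exact deriv_comp_const_add_mul g (a * x) b y

lemma deriv_const_mul_log (c : ℝ) : deriv (fun t => c * log t) = fun t => c * t ^ (-1 : ℤ) := by
  rw [deriv_const_mul_field', deriv_log']
  simp only [zpow_neg_one]

lemma deriv_const_mul_zpow (c : ℝ) (m : ℤ) :
    deriv (fun t => c * t ^ m) = fun t => c * m * t ^ (m - 1) := by
  rw [deriv_const_mul_field', deriv_zpow']
  simp only [mul_assoc]

section LinearForm

variable (a b c : ℝ)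

lemma dx_const_mul_log_linear :
    dx (fun x y => c * log (a * x + b * y)) = fun x y => c * a * (a * x + b * y) ^ (-1 : ℤ) := by
  rw [dx_comp_linear (fun t => c * log t), deriv_const_mul_log]
  simp only [mul_comm a, mul_assoc]

lemma dy_const_mul_log_linear :
    dy (fun x y => c * log (a * x + b * y)) = fun x y => c * b * (a * x + b * y) ^ (-1 : ℤ) := by
  rw [dy_comp_linear (fun t => c * log t), deriv_const_mul_log]
  simp only [mul_comm b, mul_assoc]

lemma dx_const_mul_zpow_linear (m : ℤ) :
    dx (fun x y => c * (a * x + b * y) ^ m)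
      = fun x y => c * m * a * (a * x + b * y) ^ (m - 1) := by
  rw [dx_comp_linear (fun t => c * t ^ m), deriv_const_mul_zpow]
  funext x y
  ring

lemma dy_const_mul_zpow_linear (m : ℤ) :
    dy (fun x y => c * (a * x + b * y) ^ m)
      = fun x y => c * m * b * (a * x + b * y) ^ (m - 1) := by
  rw [dy_comp_linear (fun t => c * t ^ m), deriv_const_mul_zpow]
  funext x y
  ring

end LinearForm

lemma D1_half_log_linear (a b A x y : ℝ) (hu : a * x + b * y ≠ 0) :
    D1 (fun x y => 1 / 2 * log (a * x + b * y)) (fun x y => A * log (a * x + b * y)) x y = 0 := by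
  simp only [D1, dx_const_mul_log_linear, dy_const_mul_log_linear, dx_const_mul_zpow_linear,
    dy_const_mul_zpow_linear]
  norm_num only [Int.cast_neg, Int.cast_one]
  field_simp
  ring

lemma D2_half_log_linear (a b A x y : ℝ) (hu : a * x + b * y ≠ 0) :
    D2 (fun x y => 1 / 2 * log (a * x + b * y)) (fun x y => A * log (a * x + b * y)) x y = 0 := by
  simp only [D2, dx_const_mul_log_linear, dy_const_mul_log_linear, dx_const_mul_zpow_linear,
    dy_const_mul_zpow_linear]
  norm_num only [Int.cast_neg, Int.cast_one]
  field_simp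
  ring

theorem stmt10_general (A θ : ℝ) (U : Set (ℝ × ℝ))
    (hpos : ∀ p ∈ U, Real.cos θ * p.1 + Real.sin θ * p.2 > 0) :
    ∀ p ∈ U,
      D1 (fun x y => (1/2) * Real.log (Real.cos θ * x + Real.sin θ * y))
         (fun x y => A * Real.log (Real.cos θ * x + Real.sin θ * y)) p.1 p.2 = 0 ∧
      D2 (fun x y => (1/2) * Real.log (Real.cos θ * x + Real.sin θ * y))
         (fun x y => A * Real.log (Real.cos θ * x + Real.sin θ * y)) p.1 p.2 = 0 := fun p hp =>
  ⟨D1_half_log_linear _ _ A _ _ (hpos p hp).ne', D2_half_log_linear _ _ A _ _ (hpos p hp).ne'⟩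

theorem stmt10 (A θ : ℝ) (U : Set (ℝ × ℝ)) (hU : IsOpen U)
    (hpos : ∀ p ∈ U, Real.cos θ * p.1 + Real.sin θ * p.2 > 0) :
    ∀ p ∈ U,
      D1 (fun x y => (1/2) * Real.log (Real.cos θ * x + Real.sin θ * y))
         (fun x y => A * Real.log (Real.cos θ * x + Real.sin θ * y)) p.1 p.2 = 0 ∧
      D2 (fun x y => (1/2) * Real.log (Real.cos θ * x + Real.sin θ * y))
         (fun x y => A * Real.log (Real.cos θ * x + Real.sin θ * y)) p.1 p.2 = 0 :=
  stmt10_general A θ U hpos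
end

section
/- Let A, B, t ∈ ℝ with A ≠ 0, and let U ⊆ ℝ² be an open set on which v(x,y) := A·(cos t·x + sin t·y) + B > 0. Define f : U → ℝ by f(x,y) = −2·log(v(x,y)). Then f simultaneously satisfies on U: (i) f_x·f_{xx} + f_y·f_{xy} − f_{xxx} − f_{xyy} = 0, (ii) f_x·f_{yx} + f_y·f_{yy} − f_{yxx} − f_{yyy} = 0, (iii) 2·(f_x² − f_y²) − 4·(f_{xx} − f_{yy}) = 0, and (iv) 4·f_x·f_y − 8·f_{xy} = 0; moreover (f_x, f_y) ≠ (0,0) on U. -/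
/-- `E₁ f = f_x f_xx + f_y f_xy - f_xxx - f_xyy` (this is `D₁(λ,f)` for `λ` constant). -/
noncomputable def E1 (f : ℝ → ℝ → ℝ) : ℝ → ℝ → ℝ := fun x y =>
  dx f x y * dx (dx f) x y + dy f x y * dy (dx f) x y
    - dx (dx (dx f)) x y - dy (dy (dx f)) x y

/-- `E₂ f = f_x f_yx + f_y f_yy - f_yxx - f_yyy` (this is `D₂(λ,f)` for `λ` constant). -/
noncomputable def E2 (f : ℝ → ℝ → ℝ) : ℝ → ℝ → ℝ := fun x y =>
  dx f x y * dx (dy f) x y + dy f x y * dy (dy f) x y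
    - dx (dx (dy f)) x y - dy (dy (dy f)) x y

lemma dy_eq_dx_swap (f : ℝ → ℝ → ℝ) (x y : ℝ) :
    dy f x y = dx (fun u v => f v u) y x := rfl

lemma hasDerivAt_affine (a k x : ℝ) : HasDerivAt (fun s => a * s + k) a x := by
  simpa using ((hasDerivAt_id x).const_mul a).add_const k

lemma deriv_div_affine_pow (c a k x : ℝ) (n : ℕ) (h : a * x + k ≠ 0) :
    deriv (fun s => c / (a * s + k) ^ n) x = -n * c * a / (a * x + k) ^ (n + 1) := by
  have hd : HasDerivAt (fun s => c / (a * s + k) ^ n) _ x :=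
    (hasDerivAt_const x c).div ((hasDerivAt_affine a k x).fun_pow n) (pow_ne_zero n h)
  rw [hd.deriv]
  cases n with
  | zero => simp
  | succ n => field_simp; push_cast; ring

def IsDivAffinePow (F : ℝ → ℝ → ℝ) (a b B c : ℝ) (n : ℕ) : Prop :=
  ∀ x y, a * x + b * y + B ≠ 0 → F x y = c / (a * x + b * y + B) ^ n

namespace IsDivAffinePow

variable {F : ℝ → ℝ → ℝ} {a b B c : ℝ} {n : ℕ}

theorem swap (hF : IsDivAffinePow F a b B c n) :
    IsDivAffinePow (fun u v => F v u) b a B c n := by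
  intro x y h
  rw [add_comm (b * x)] at h ⊢
  exact hF y x h

theorem dx (hF : IsDivAffinePow F a b B c n) :
    IsDivAffinePow (dx F) a b B (-n * c * a) (n + 1) := by
  intro x y h
  have hloc : (fun s => F s y) =ᶠ[nhds x] fun s => c / (a * s + (b * y + B)) ^ n := by
    have hcont : Continuous fun s => a * s + (b * y + B) := by fun_prop
    filter_upwards [hcont.continuousAt.eventually_ne (by rwa [← add_assoc])] with s hs
    rw [hF s y (by rwa [add_assoc]), add_assoc]
  rw [_root_.dx, hloc.deriv_eq, deriv_div_affine_pow c a _ x n (by rwa [← add_assoc]), add_assoc]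

theorem dy (hF : IsDivAffinePow F a b B c n) :
    IsDivAffinePow (dy F) a b B (-n * c * b) (n + 1) := by
  intro x y h
  rw [dy_eq_dx_swap, hF.swap.dx y x (by rwa [add_comm (b * y)]), add_comm (b * y)]

end IsDivAffinePow

noncomputable def logAffine (a b B : ℝ) : ℝ → ℝ → ℝ :=
  fun x y => -2 * Real.log (a * x + b * y + B)

section logAffine

variable (a b B : ℝ)

theorem logAffine_swap : (fun u v => logAffine a b B v u) = logAffine b a B := by
  funext u v
  simp only [logAffine, add_comm (a * v)]

theorem isDivAffinePow_dx_logAffine : IsDivAffinePow (dx (logAffine a b B)) a b B (-2 * a) 1 := by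
  intro x y h
  have hd : HasDerivAt (fun s => -2 * Real.log (a * s + (b * y + B)))
      (-2 * (a / (a * x + (b * y + B)))) x :=
    ((hasDerivAt_affine a _ x).log (by rwa [← add_assoc])).const_mul (-2)
  simp only [dx, logAffine, add_assoc]
  rw [hd.deriv, pow_one]
  ring

theorem isDivAffinePow_dy_logAffine : IsDivAffinePow (dy (logAffine a b B)) a b B (-2 * b) 1 := by
  intro x y h
  rw [dy_eq_dx_swap, logAffine_swap,
    isDivAffinePow_dx_logAffine b a B y x (by rwa [add_comm (b * y)]), add_comm (b * y)]

variable {a b B} {x y : ℝ}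

theorem E1_logAffine_eq_zero (h : a * x + b * y + B ≠ 0) : E1 (logAffine a b B) x y = 0 := by
  have fx := isDivAffinePow_dx_logAffine a b B
  have fy := isDivAffinePow_dy_logAffine a b B
  rw [E1, fx x y h, fy x y h, fx.dx x y h, fx.dy x y h, fx.dx.dx x y h, fx.dy.dy x y h]
  push_cast
  field_simp
  ring

theorem E2_logAffine_eq_zero (h : a * x + b * y + B ≠ 0) : E2 (logAffine a b B) x y = 0 := by
  have fx := isDivAffinePow_dx_logAffine a b B
  have fy := isDivAffinePow_dy_logAffine a b B
  rw [E2, fx x y h, fy x y h, fy.dx x y h, fy.dy x y h, fy.dx.dx x y h, fy.dy.dy x y h]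
  push_cast
  field_simp
  ring

theorem logAffine_D3_eq_zero (h : a * x + b * y + B ≠ 0) :
    2 * (dx (logAffine a b B) x y ^ 2 - dy (logAffine a b B) x y ^ 2)
      - 4 * (dx (dx (logAffine a b B)) x y - dy (dy (logAffine a b B)) x y) = 0 := by
  have fx := isDivAffinePow_dx_logAffine a b B
  have fy := isDivAffinePow_dy_logAffine a b B
  rw [fx x y h, fy x y h, fx.dx x y h, fy.dy x y h]
  push_cast
  field_simp
  ring

theorem logAffine_D4_eq_zero (h : a * x + b * y + B ≠ 0) :
    4 * dx (logAffine a b B) x y * dy (logAffine a b B) x y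
      - 8 * dy (dx (logAffine a b B)) x y = 0 := by
  have fx := isDivAffinePow_dx_logAffine a b B
  have fy := isDivAffinePow_dy_logAffine a b B
  rw [fx x y h, fy x y h, fx.dy x y h]
  push_cast
  field_simp
  ring

theorem logAffine_grad_ne_zero (h : a * x + b * y + B ≠ 0) (hab : a ≠ 0 ∨ b ≠ 0) :
    ¬ (dx (logAffine a b B) x y = 0 ∧ dy (logAffine a b B) x y = 0) := by
  rw [isDivAffinePow_dx_logAffine a b B x y h, isDivAffinePow_dy_logAffine a b B x y h]
  rintro ⟨hx, hy⟩
  simp_all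

end logAffine

theorem stmt12_general (A B t : ℝ) (hA : A ≠ 0) (U : Set (ℝ × ℝ))
    (hpos : ∀ p ∈ U, A * (Real.cos t * p.1 + Real.sin t * p.2) + B > 0) :
    ∀ p ∈ U,
      E1 (fun x y => -2 * Real.log (A * (Real.cos t * x + Real.sin t * y) + B)) p.1 p.2 = 0 ∧
      E2 (fun x y => -2 * Real.log (A * (Real.cos t * x + Real.sin t * y) + B)) p.1 p.2 = 0 ∧
      2 * ((dx (fun x y => -2 * Real.log (A * (Real.cos t * x + Real.sin t * y) + B)) p.1 p.2)^2
            - (dy (fun x y => -2 * Real.log (A * (Real.cos t * x + Real.sin t * y) + B)) p.1 p.2)^2)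
        - 4 * (dx (dx (fun x y => -2 * Real.log (A * (Real.cos t * x + Real.sin t * y) + B))) p.1 p.2
            - dy (dy (fun x y => -2 * Real.log (A * (Real.cos t * x + Real.sin t * y) + B))) p.1 p.2) = 0 ∧
      4 * dx (fun x y => -2 * Real.log (A * (Real.cos t * x + Real.sin t * y) + B)) p.1 p.2
          * dy (fun x y => -2 * Real.log (A * (Real.cos t * x + Real.sin t * y) + B)) p.1 p.2
        - 8 * dy (dx (fun x y => -2 * Real.log (A * (Real.cos t * x + Real.sin t * y) + B))) p.1 p.2 = 0 ∧
      ¬ (dx (fun x y => -2 * Real.log (A * (Real.cos t * x + Real.sin t * y) + B)) p.1 p.2 = 0 ∧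
          dy (fun x y => -2 * Real.log (A * (Real.cos t * x + Real.sin t * y) + B)) p.1 p.2 = 0) := by
  intro p hp
  have hf : (fun x y => -2 * Real.log (A * (Real.cos t * x + Real.sin t * y) + B))
      = logAffine (A * Real.cos t) (A * Real.sin t) B := by
    funext x y
    simp only [logAffine, mul_add, mul_assoc]
  have hv : A * Real.cos t * p.1 + A * Real.sin t * p.2 + B ≠ 0 := by
    have := hpos p hp
    rw [mul_add, ← mul_assoc, ← mul_assoc] at this
    exact this.ne'
  have hab : A * Real.cos t ≠ 0 ∨ A * Real.sin t ≠ 0 := by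
    by_contra! h
    have h2 : A ^ 2 * (Real.sin t ^ 2 + Real.cos t ^ 2) = 0 := by
      linear_combination A * Real.cos t * h.1 + A * Real.sin t * h.2
    simp [hA] at h2
  rw [hf]
  exact ⟨E1_logAffine_eq_zero hv, E2_logAffine_eq_zero hv, logAffine_D3_eq_zero hv,
    logAffine_D4_eq_zero hv, logAffine_grad_ne_zero hv hab⟩

theorem stmt12 (A B t : ℝ) (hA : A ≠ 0) (U : Set (ℝ × ℝ)) (hU : IsOpen U)
    (hpos : ∀ p ∈ U, A * (Real.cos t * p.1 + Real.sin t * p.2) + B > 0) :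
    ∀ p ∈ U,
      E1 (fun x y => -2 * Real.log (A * (Real.cos t * x + Real.sin t * y) + B)) p.1 p.2 = 0 ∧
      E2 (fun x y => -2 * Real.log (A * (Real.cos t * x + Real.sin t * y) + B)) p.1 p.2 = 0 ∧
      2 * ((dx (fun x y => -2 * Real.log (A * (Real.cos t * x + Real.sin t * y) + B)) p.1 p.2)^2
            - (dy (fun x y => -2 * Real.log (A * (Real.cos t * x + Real.sin t * y) + B)) p.1 p.2)^2)
        - 4 * (dx (dx (fun x y => -2 * Real.log (A * (Real.cos t * x + Real.sin t * y) + B))) p.1 p.2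
            - dy (dy (fun x y => -2 * Real.log (A * (Real.cos t * x + Real.sin t * y) + B))) p.1 p.2) = 0 ∧
      4 * dx (fun x y => -2 * Real.log (A * (Real.cos t * x + Real.sin t * y) + B)) p.1 p.2
          * dy (fun x y => -2 * Real.log (A * (Real.cos t * x + Real.sin t * y) + B)) p.1 p.2
        - 8 * dy (dx (fun x y => -2 * Real.log (A * (Real.cos t * x + Real.sin t * y) + B))) p.1 p.2 = 0 ∧
      ¬ (dx (fun x y => -2 * Real.log (A * (Real.cos t * x + Real.sin t * y) + B)) p.1 p.2 = 0 ∧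
          dy (fun x y => -2 * Real.log (A * (Real.cos t * x + Real.sin t * y) + B)) p.1 p.2 = 0) :=
  stmt12_general A B t hA U hpos
end
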